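/- For rational subspaces r, t, a regular face F for X\r, and any function g supported on Γ ∩ r, the identity ∇_{X\t}(P_{X\r}^{F} * g) = P_{(X\r)∩t}^{F} * (∇_{(X∩r)\(t∩r)} g) holds. -/

import Mathlib

open Function

attribute [local instance] Classical.propDecidable

noncomputable section

/-- The lattice `Γ = ι → ℤ`. -/
abbrev ZLat (ι : Type*) := ι → ℤ
/-- The ambient real vector space `V = Γ ⊗ ℝ = ι → ℝ`. -/
abbrev Amb (ι : Type*) := ι → ℝ

variable {ι : Type*} [Fintype ι]

/-- Embedding of the lattice into the ambient space. -/
def castV (γ : ZLat ι) : Amb ι := fun i => (γ i : ℝ)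

/-- Standard pairing on `V`. -/
def dotR (u v : Amb ι) : ℝ := ∑ i, u i * v i

/-- The difference operator `∇ₐ`. -/
def nab (a : ZLat ι) (f : ZLat ι → ℤ) : ZLat ι → ℤ := fun b => f b - f (b - a)

/-- `∇_Y = ∏_{a ∈ Y} ∇ₐ` for a list `Y`. -/
def nabL (Y : List (ZLat ι)) (f : ZLat ι → ℤ) : ZLat ι → ℤ := Y.foldr nab f

/-- Delta function at `0`. -/
def delta0 : ZLat ι → ℤ := fun γ => if γ = 0 then 1 else 0

/-- The partition function of a list `Y`: the number of ways of writing `γ` as a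
nonnegative integral combination of the entries of `Y`. -/
def partFn (Y : List (ZLat ι)) : ZLat ι → ℤ :=
  fun γ => Nat.card {k : Fin Y.length → ℕ // ∑ i, (k i : ℤ) • Y.get i = γ}

/-- The cone `C(Y)` of nonnegative real combinations of the entries of `Y`. -/
def coneC (Y : List (ZLat ι)) : Set (Amb ι) :=
  {v | ∃ t : Fin Y.length → ℝ, (∀ i, 0 ≤ t i) ∧ v = ∑ i, t i • castV (Y.get i)}

/-- `C(Y)` is pointed: it contains no line. -/
def PointedList (Y : List (ZLat ι)) : Prop :=
  ∀ v ∈ coneC Y, -v ∈ coneC Y → v = 0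

/-- The zonotope `B(Y) = {∑ tᵢ aᵢ : 0 ≤ tᵢ ≤ 1}`. -/
def zono (Y : List (ZLat ι)) : Set (Amb ι) :=
  {v | ∃ t : Fin Y.length → ℝ, (∀ i, 0 ≤ t i ∧ t i ≤ 1) ∧ v = ∑ i, t i • castV (Y.get i)}

/-- The real span of a list of lattice vectors. -/
def spanOf (Y : List (ZLat ι)) : Submodule ℝ (Amb ι) :=
  Submodule.span ℝ (castV '' {a | a ∈ Y})

/-- A subspace is rational (relative to `X`) if it is spanned by a sublist of `X`. -/
def IsRational (X : List (ZLat ι)) (r : Submodule ℝ (Amb ι)) : Prop :=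
  ∃ Y : List (ZLat ι), (∀ a ∈ Y, a ∈ X) ∧ r = spanOf Y

/-- The sublist `X ∩ r`. -/
def inSub (X : List (ZLat ι)) (r : Submodule ℝ (Amb ι)) : List (ZLat ι) :=
  X.filter (fun a => decide (castV a ∈ r))

/-- The sublist `X \ r`. -/
def outSub (X : List (ZLat ι)) (r : Submodule ℝ (Amb ι)) : List (ZLat ι) :=
  X.filter (fun a => decide (castV a ∉ r))

/-- The operator `∇_{X \ r}`. -/
def nabOut (X : List (ZLat ι)) (r : Submodule ℝ (Amb ι)) (f : ZLat ι → ℤ) : ZLat ι → ℤ :=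
  nabL (outSub X r) f

/-- The space `𝓕(X)`: `∇_{X\r} f` is supported on `Γ ∩ r` for every rational `r`. -/
def memF (X : List (ZLat ι)) (f : ZLat ι → ℤ) : Prop :=
  ∀ r, IsRational X r → support (nabOut X r f) ⊆ {γ | castV γ ∈ r}

/-- The Dahmen–Micchelli space of a list `Y` (inside its span): `f` is killed by
`∇_{Y \ H}` for every rational hyperplane `H` of the span of `Y`. -/
def memDM (Y : List (ZLat ι)) (f : ZLat ι → ℤ) : Prop :=
  ∀ H, IsRational Y H → Module.finrank ℝ H + 1 = Module.finrank ℝ (spanOf Y) →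
    nabOut Y H f = 0

/-- `𝓕(X ∩ r)`, viewed as functions on `Γ` supported on `Γ ∩ r`. -/
def memFrel (X : List (ZLat ι)) (r : Submodule ℝ (Amb ι)) (g : ZLat ι → ℤ) : Prop :=
  support g ⊆ {γ | castV γ ∈ r} ∧ memF (inSub X r) g

/-- `DM(X ∩ r)`, viewed as functions on `Γ` supported on `Γ ∩ r`. -/
def memDMrel (X : List (ZLat ι)) (r : Submodule ℝ (Amb ι)) (g : ZLat ι → ℤ) : Prop :=
  support g ⊆ {γ | castV γ ∈ r} ∧ memDM (inSub X r) g

/-- `u` is a regular vector for `X \ r`:  `u ∈ r^⊥` and `⟨u, a⟩ ≠ 0` for all `a ∈ X \ r`.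
It determines the regular face `F` containing it. -/
def Reg (X : List (ZLat ι)) (r : Submodule ℝ (Amb ι)) (u : Amb ι) : Prop :=
  (∀ v ∈ r, dotR u v = 0) ∧ ∀ a ∈ X, castV a ∉ r → dotR u (castV a) ≠ 0

/-- The sublist `B ⊆ X \ r` of elements negative on `u`. -/
def negPart (X : List (ZLat ι)) (r : Submodule ℝ (Amb ι)) (u : Amb ι) : List (ZLat ι) :=
  (outSub X r).filter (fun a => decide (dotR u (castV a) < 0))

/-- The list `[A, -B]`: entries of `X \ r`, with sign flipped on the part negative on `u`. -/
def signedOut (X : List (ZLat ι)) (r : Submodule ℝ (Amb ι)) (u : Amb ι) : List (ZLat ι) :=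
  (outSub X r).map (fun a => if 0 < dotR u (castV a) then a else -a)

/-- The special function `𝓟_{X\r}^F` for the face `F ∋ u`:
`(-1)^{|B|} τ_{-∑_{b∈B} b} (∏_{a∈A} ∑_k δ_{ka}) * (∏_{b∈B} ∑_k δ_{-kb})`. -/
def PF (X : List (ZLat ι)) (r : Submodule ℝ (Amb ι)) (u : Amb ι) : ZLat ι → ℤ :=
  fun γ => (-1) ^ (negPart X r u).length *
    partFn (signedOut X r u) (γ + (negPart X r u).sum)

/-- The support region `-∑_{b∈B} b + C(A, -B)` of `𝓟_{X\r}^F`, as a subset of `Γ`. -/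
def PFsupp (X : List (ZLat ι)) (r : Submodule ℝ (Amb ι)) (u : Amb ι) : Set (ZLat ι) :=
  {γ | castV (γ + (negPart X r u).sum) ∈ coneC (signedOut X r u)}

/-- Convolution of two functions on the lattice. -/
def conv (f g : ZLat ι → ℤ) : ZLat ι → ℤ := fun γ => ∑ᶠ μ, f (γ - μ) * g μ

/-- The union of all rational hyperplanes (inside the span of `Y`). -/
def hyperUnion (Y : List (ZLat ι)) : Set (Amb ι) :=
  {v | ∃ H, IsRational Y H ∧ Module.finrank ℝ H + 1 = Module.finrank ℝ (spanOf Y) ∧ v ∈ H}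

/-- A tope for `Y`: a connected component of the complement (in the span of `Y`) of the
union of the hyperplanes spanned by sublists of `Y`. -/
def IsTope (Y : List (ZLat ι)) (τ : Set (Amb ι)) : Prop :=
  ∃ v ∈ (spanOf Y : Set (Amb ι)) \ hyperUnion Y,
    τ = connectedComponentIn ((spanOf Y : Set (Amb ι)) \ hyperUnion Y) v

/-- The set of singular vectors: the union of the cones `C(Y)` over sublists `Y` of `X`
not spanning `V`. -/
def singSet (X : List (ZLat ι)) : Set (Amb ι) :=
  {v | ∃ Y : List (ZLat ι), (∀ a ∈ Y, a ∈ X) ∧ spanOf Y ≠ ⊤ ∧ v ∈ coneC Y}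

/-- A big cell: a connected component of the complement of the set of singular vectors. -/
def IsBigCell (X : List (ZLat ι)) (c : Set (Amb ι)) : Prop :=
  ∃ v ∈ (singSet X)ᶜ, c = connectedComponentIn (singSet X)ᶜ v

/-- Minkowski difference of sets, `A - B`. -/
def sdiffSet (A B : Set (Amb ι)) : Set (Amb ι) := {x | ∃ a ∈ A, ∃ b ∈ B, x = a - b}

/-!
Up to sign and translation, `𝓟_{X\r}^F` is the partition function of `X \ r` with the vectors
negative on `u` reversed. As `u` is positive on the reoriented list, the recurrence
`𝒫_{v::Z}(γ) = 𝒫_Z(γ) + 𝒫_{v::Z}(γ - v)` gives `∇_a 𝓟_{a::M} = 𝓟_M` for every `a` with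
`⟨u, a⟩ ≠ 0`. Split `∇_{X\t} = ∇_{(X\t)∩r} ∇_{(X\r)\t}`: the second factor, moved onto
`𝓟_{X\r}^F`, strips it down to `𝓟_{(X\r)∩t}^F`; the first, moved onto `g`, is
`∇_{(X∩r)\(t∩r)}`. All convolutions are finite sums because `u` vanishes on the support of `g`
and only finitely many nonnegative combinations of the reoriented list lie on a level set of `u`.
-/

section

variable {ι : Type*}

def reps (Y : List (ZLat ι)) (γ : ZLat ι) : Set (Fin Y.length → ℕ) :=
  {k | ∑ i, (k i : ℤ) • Y.get i = γ}

lemma partFn_eq_ncard (Y : List (ZLat ι)) (γ : ZLat ι) : partFn Y γ = (reps Y γ).ncard := by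
  rw [← Nat.card_coe_set_eq]
  rfl

lemma finite_setOf_map_sum_smul_eq (φ : ZLat ι →+ ℝ) {Y : List (ZLat ι)}
    (hY : ∀ a ∈ Y, 0 < φ a) (s : ℝ) :
    {k : Fin Y.length → ℕ | φ (∑ i, (k i : ℤ) • Y.get i) = s}.Finite := by
  refine (Set.Finite.pi fun i => Set.finite_Iic ⌈s / φ (Y.get i)⌉₊).subset ?_
  intro k hk i _
  have hpos : ∀ j, 0 < φ (Y.get j) := fun j => hY _ (Y.get_mem j)
  have hsum : ∑ j, (k j : ℝ) * φ (Y.get j) = s := by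
    simp only [Set.mem_ofPred_eq, map_sum, map_zsmul] at hk
    simpa only [zsmul_eq_mul, Int.cast_natCast] using hk
  have hle : (k i : ℝ) * φ (Y.get i) ≤ s :=
    hsum ▸ Finset.single_le_sum (f := fun j => (k j : ℝ) * φ (Y.get j))
      (fun j _ => mul_nonneg (Nat.cast_nonneg _) (hpos j).le) (Finset.mem_univ i)
  exact Nat.cast_le.1 (((le_div_iff₀ (hpos i)).2 hle).trans (Nat.le_ceil _))

lemma reps_finite (φ : ZLat ι →+ ℝ) {Y : List (ZLat ι)} (hY : ∀ a ∈ Y, 0 < φ a) (γ : ZLat ι) :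
    (reps Y γ).Finite :=
  (finite_setOf_map_sum_smul_eq φ hY (φ γ)).subset fun _ hk => congrArg φ hk

lemma mem_reps_cons {v γ : ZLat ι} {Z : List (ZLat ι)} {k : Fin (Z.length + 1) → ℕ} :
    k ∈ reps (v :: Z) γ ↔ (k 0 : ℤ) • v + ∑ i, (k i.succ : ℤ) • Z.get i = γ := by
  simp [reps, Fin.sum_univ_succ]

lemma reps_cons (v : ZLat ι) (Z : List (ZLat ι)) (γ : ZLat ι) :
    reps (v :: Z) γ = Fin.cons 0 '' reps Z γ ∪
      (fun k => Function.update k 0 (k 0 + 1)) '' reps (v :: Z) (γ - v) := by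
  ext (k : Fin (Z.length + 1) → ℕ)
  simp only [Set.mem_union, Set.mem_image, mem_reps_cons]
  constructor
  · intro hk
    by_cases h0 : k 0 = 0
    · refine Or.inl ⟨Fin.tail k, ?_, h0 ▸ Fin.cons_self_tail k⟩
      simpa [reps, Fin.tail, h0] using hk
    · have h1 : 1 ≤ k 0 := Nat.one_le_iff_ne_zero.2 h0
      refine Or.inr ⟨Function.update k 0 (k 0 - 1), ?_, by simp [Nat.sub_add_cancel h1]⟩
      rw [mem_reps_cons, ← hk]
      simp only [Function.update_self, Function.update_of_ne (Fin.succ_ne_zero _)]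
      push_cast [h1]
      rw [sub_smul, one_smul]
      abel
  · rintro (⟨l, hl, rfl⟩ | ⟨l, hl, rfl⟩)
    · simpa [reps] using hl
    · rw [mem_reps_cons] at hl
      simp only [Function.update_self, Function.update_of_ne (Fin.succ_ne_zero _)]
      push_cast
      rw [add_smul, one_smul, add_right_comm, hl, sub_add_cancel]

lemma partFn_cons (φ : ZLat ι →+ ℝ) {v : ZLat ι} {Z : List (ZLat ι)}
    (hvZ : ∀ a ∈ v :: Z, 0 < φ a) (γ : ZLat ι) :
    partFn (v :: Z) γ = partFn Z γ + partFn (v :: Z) (γ - v) := by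
  have hZ : ∀ a ∈ Z, 0 < φ a := fun a ha => hvZ a (List.mem_cons_of_mem v ha)
  have hdisj : Disjoint (Fin.cons 0 '' reps Z γ)
      ((fun k => Function.update k 0 (k 0 + 1)) '' reps (v :: Z) (γ - v)) := by
    rw [Set.disjoint_left]
    rintro _ ⟨k, -, rfl⟩ ⟨l, -, hl⟩
    simpa using congrFun hl 0
  have hinj : Function.Injective fun k : Fin (Z.length + 1) → ℕ =>
      Function.update k 0 (k 0 + 1) := by
    intro k l hkl
    have h0 : k 0 = l 0 := by simpa using congrFun hkl 0
    funext i
    by_cases hi : i = 0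
    · rw [hi, h0]
    · simpa [Function.update_of_ne hi] using congrFun hkl i
  rw [partFn_eq_ncard, partFn_eq_ncard, partFn_eq_ncard, reps_cons,
    Set.ncard_union_eq hdisj ((reps_finite φ hZ γ).image _)
      ((reps_finite φ hvZ (γ - v)).image _),
    Set.ncard_image_of_injective _ (Fin.cons_right_injective 0),
    Set.ncard_image_of_injective _ hinj, Nat.cast_add]

lemma partFn_perm {Y₁ Y₂ : List (ZLat ι)} (h : Y₁.Perm Y₂) : partFn Y₁ = partFn Y₂ := by
  funext γ
  let σ : Fin Y₁.length ≃ Fin Y₂.length :=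
    Equiv.ofBijective h.idxBij ⟨h.idxBij_injective, h.idxBij_surjective⟩
  have hσ : ∀ i, Y₂.get (σ i) = Y₁.get i := h.getElem_idxBij_eq_getElem
  refine congrArg _ (Nat.card_congr (Equiv.subtypeEquiv (σ.arrowCongr (Equiv.refl ℕ)) ?_))
  intro k
  rw [← Fintype.sum_equiv σ (fun i => (k i : ℤ) • Y₁.get i) _ fun i => by rw [hσ]; simp]

lemma nab_comm (a b : ZLat ι) (f : ZLat ι → ℤ) : nab a (nab b f) = nab b (nab a f) := by
  funext γ
  simp only [nab, sub_right_comm γ a b]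
  ring

lemma nabL_cons (a : ZLat ι) (L : List (ZLat ι)) (f : ZLat ι → ℤ) :
    nabL (a :: L) f = nab a (nabL L f) := rfl

lemma nabL_append (L₁ L₂ : List (ZLat ι)) (f : ZLat ι → ℤ) :
    nabL (L₁ ++ L₂) f = nabL L₁ (nabL L₂ f) :=
  List.foldr_append

lemma nab_nabL_comm (a : ZLat ι) (L : List (ZLat ι)) (f : ZLat ι → ℤ) :
    nab a (nabL L f) = nabL L (nab a f) := by
  induction L with
  | nil => rfl
  | cons b L ih => rw [nabL_cons, nabL_cons, ← ih, nab_comm]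

lemma nabL_perm {L₁ L₂ : List (ZLat ι)} (h : L₁.Perm L₂) (f : ZLat ι → ℤ) :
    nabL L₁ f = nabL L₂ f := by
  induction h with
  | nil => rfl
  | cons x _ ih => rw [nabL_cons, nabL_cons, ih]
  | swap x y l => exact nab_comm y x _
  | trans _ _ ih₁ ih₂ => rw [ih₁, ih₂]

lemma nabL_eq_nabL_filter_nabL_filter (p : ZLat ι → Bool) (L : List (ZLat ι))
    (f : ZLat ι → ℤ) : nabL L f = nabL (L.filter p) (nabL (L.filter fun a => !p a) f) := by
  rw [← nabL_append, nabL_perm (List.filter_append_perm p L)]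

def orient (φ : ZLat ι →+ ℝ) (a : ZLat ι) : ZLat ι := if 0 < φ a then a else -a

lemma map_orient_pos (φ : ZLat ι →+ ℝ) {a : ZLat ι} (ha : φ a ≠ 0) : 0 < φ (orient φ a) := by
  unfold orient
  split_ifs with h
  · exact h
  · rw [map_neg, neg_pos]
    exact lt_of_le_of_ne (not_lt.1 h) ha

/-- The paper's `𝓟^F` for an arbitrary list `M` in place of `X \ r`, the face `F` being given
by the signs of `φ`. -/
def signedPartFn (φ : ZLat ι →+ ℝ) (M : List (ZLat ι)) : ZLat ι → ℤ := fun γ =>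
  (-1) ^ (M.filter fun a => decide (φ a < 0)).length *
    partFn (M.map (orient φ)) (γ + (M.filter fun a => decide (φ a < 0)).sum)

lemma signedPartFn_perm (φ : ZLat ι →+ ℝ) {M₁ M₂ : List (ZLat ι)} (h : M₁.Perm M₂) :
    signedPartFn φ M₁ = signedPartFn φ M₂ := by
  have hf := h.filter fun a => decide (φ a < 0)
  funext γ
  rw [signedPartFn, signedPartFn, hf.length_eq, hf.sum_eq, partFn_perm (h.map (orient φ))]

lemma nab_signedPartFn_cons (φ : ZLat ι →+ ℝ) {a : ZLat ι} {M : List (ZLat ι)}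
    (hM : ∀ b ∈ a :: M, φ b ≠ 0) : nab a (signedPartFn φ (a :: M)) = signedPartFn φ M := by
  have hpos : ∀ b ∈ orient φ a :: M.map (orient φ), 0 < φ b := by
    simpa using fun b hb => map_orient_pos φ (hM b hb)
  have hrec := partFn_cons φ hpos
  funext γ
  rcases lt_or_gt_of_ne (hM a List.mem_cons_self) with ha | ha
  · have ho : orient φ a = -a := if_neg (lt_asymm ha)
    simp only [nab, signedPartFn, List.filter_cons, ha, decide_true, if_true, List.map_cons,
      List.length_cons, List.sum_cons, ho] at hrec ⊢
    set B := M.filter fun b => decide (φ b < 0)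
    rw [show γ - a + (a + B.sum) = γ + B.sum by abel, hrec (γ + B.sum),
      show γ + B.sum - -a = γ + (a + B.sum) by abel]
    ring
  · have ho : orient φ a = a := if_pos ha
    simp only [nab, signedPartFn, List.filter_cons, not_lt.2 ha.le, decide_false,
      Bool.false_eq_true, if_false, List.map_cons, ho] at hrec ⊢
    set B := M.filter fun b => decide (φ b < 0)
    rw [show γ - a + B.sum = γ + B.sum - a by abel, hrec (γ + B.sum)]
    ring

lemma nabL_signedPartFn_append (φ : ZLat ι →+ ℝ) {L M : List (ZLat ι)}
    (hLM : ∀ b ∈ L ++ M, φ b ≠ 0) : nabL L (signedPartFn φ (L ++ M)) = signedPartFn φ M := by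
  induction L with
  | nil => rfl
  | cons a L ih =>
    rw [List.cons_append] at hLM ⊢
    rw [nabL_cons, nab_nabL_comm, nab_signedPartFn_cons φ hLM]
    exact ih fun b hb => hLM b (List.mem_cons_of_mem a hb)

lemma nabL_filter_signedPartFn (φ : ZLat ι →+ ℝ) (p : ZLat ι → Bool) {M : List (ZLat ι)}
    (hM : ∀ b ∈ M, φ b ≠ 0) :
    nabL (M.filter p) (signedPartFn φ M) = signedPartFn φ (M.filter fun a => !p a) := by
  rw [signedPartFn_perm φ (List.filter_append_perm p M).symm]
  exact nabL_signedPartFn_append φ fun b hb => hM b ((List.filter_append_perm p M).subset hb)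

/-- `conv f g γ` is a genuine finite sum (otherwise `∑ᶠ` returns the junk value `0`). -/
def ConvFinite (f g : ZLat ι → ℤ) : Prop :=
  ∀ γ, (Function.support fun μ => f (γ - μ) * g μ).Finite

lemma conv_comm (f g : ZLat ι → ℤ) : conv f g = conv g f := by
  funext γ
  rw [conv, conv, ← finsum_comp_equiv (Equiv.subLeft γ)]
  simp only [Equiv.subLeft_apply, sub_sub_cancel, mul_comm]

lemma ConvFinite.symm {f g : ZLat ι → ℤ} (h : ConvFinite f g) : ConvFinite g f := by
  intro γ
  refine ((h γ).image (γ - ·)).subset fun μ hμ => ⟨γ - μ, ?_, sub_sub_cancel γ μ⟩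
  rw [Function.mem_support, sub_sub_cancel, mul_comm]
  exact hμ

lemma ConvFinite.nab_left {f g : ZLat ι → ℤ} (h : ConvFinite f g) (a : ZLat ι) :
    ConvFinite (nab a f) g := by
  intro γ
  refine ((h γ).union (h (γ - a))).subset fun μ hμ => ?_
  by_contra hc
  simp only [Set.mem_union, Function.mem_support, not_or, not_not] at hc
  apply hμ
  simp only [nab, sub_mul, sub_right_comm γ μ a, hc.1, hc.2, sub_zero]

lemma nab_conv_left {f g : ZLat ι → ℤ} (h : ConvFinite f g) (a : ZLat ι) :
    nab a (conv f g) = conv (nab a f) g := by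
  funext γ
  simp only [nab, conv, sub_mul, sub_right_comm γ _ a]
  exact (finsum_sub_distrib (h γ) (h (γ - a))).symm

lemma ConvFinite.nabL_left {f g : ZLat ι → ℤ} (h : ConvFinite f g) (L : List (ZLat ι)) :
    ConvFinite (nabL L f) g := by
  induction L with
  | nil => exact h
  | cons a L ih => exact ih.nab_left a

lemma nabL_conv_left {f g : ZLat ι → ℤ} (h : ConvFinite f g) (L : List (ZLat ι)) :
    nabL L (conv f g) = conv (nabL L f) g := by
  induction L with
  | nil => rfl
  | cons a L ih => rw [nabL_cons, ih, nab_conv_left (h.nabL_left L), nabL_cons]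

lemma nabL_conv_right {f g : ZLat ι → ℤ} (h : ConvFinite f g) (L : List (ZLat ι)) :
    nabL L (conv f g) = conv f (nabL L g) := by
  rw [conv_comm, nabL_conv_left h.symm, conv_comm]

lemma convFinite_signedPartFn (φ : ZLat ι →+ ℝ) {M : List (ZLat ι)} (hM : ∀ a ∈ M, φ a ≠ 0)
    {g : ZLat ι → ℤ} (hg : ∀ μ ∈ Function.support g, φ μ = 0) :
    ConvFinite (signedPartFn φ M) g := by
  intro γ
  set L := M.map (orient φ)
  set σ := (M.filter fun a => decide (φ a < 0)).sum
  have hL : ∀ b ∈ L, 0 < φ b := by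
    simpa [L] using fun a ha => map_orient_pos φ (hM a ha)
  refine ((finite_setOf_map_sum_smul_eq φ hL (φ (γ + σ))).image
    fun k => γ + σ - ∑ i, (k i : ℤ) • L.get i).subset fun μ hμ => ?_
  obtain ⟨hS, hgμ⟩ := mul_ne_zero_iff.1 (Function.mem_support.1 hμ)
  have hP : (reps L (γ - μ + σ)).ncard ≠ 0 := by
    have := right_ne_zero_of_mul hS
    rwa [partFn_eq_ncard, Nat.cast_ne_zero] at this
  obtain ⟨k, hk⟩ := Set.nonempty_of_ncard_ne_zero hP
  refine ⟨k, ?_, ?_⟩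
  · rw [Set.mem_ofPred_eq, show ∑ i, (k i : ℤ) • L.get i = γ - μ + σ from hk]
    simp [hg μ hgμ]
  · simp only [show ∑ i, (k i : ℤ) • L.get i = γ - μ + σ from hk]
    abel

end

def dotZ {ι : Type*} [Fintype ι] (u : Amb ι) : ZLat ι →+ ℝ :=
  AddMonoidHom.mk' (fun a => dotR u (castV a)) fun a b => by
    simp only [dotR, castV, Pi.add_apply, Int.cast_add, mul_add, Finset.sum_add_distrib]

section

variable {ι : Type*} [Fintype ι]

lemma PF_eq_signedPartFn (X : List (ZLat ι)) (r : Submodule ℝ (Amb ι)) (u : Amb ι) :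
    PF X r u = signedPartFn (dotZ u) (outSub X r) := rfl

lemma Reg.dotZ_ne_zero {X : List (ZLat ι)} {r : Submodule ℝ (Amb ι)} {u : Amb ι}
    (hu : Reg X r u) {a : ZLat ι} (ha : a ∈ outSub X r) : dotZ u a ≠ 0 := by
  obtain ⟨haX, har⟩ := List.mem_filter.1 ha
  exact hu.2 a haX (of_decide_eq_true har)

lemma Reg.inSub {X : List (ZLat ι)} {r : Submodule ℝ (Amb ι)} {u : Amb ι} (hu : Reg X r u)
    (t : Submodule ℝ (Amb ι)) : Reg (inSub X t) r u :=
  ⟨hu.1, fun a ha => hu.2 a (List.mem_of_mem_filter ha)⟩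

end

theorem mother_formula_general {ι : Type*} [Fintype ι] (X : List (ZLat ι))
    (r t : Submodule ℝ (Amb ι))
    (u : Amb ι) (hu : Reg X r u)
    (g : ZLat ι → ℤ) (hg : Function.support g ⊆ {γ | castV γ ∈ r}) :
    nabOut X t (conv (PF X r u) g) =
      conv (PF (inSub X t) r u) (nabL (outSub (inSub X r) (t ⊓ r)) g) := by
  have hfin : ∀ Y, Reg Y r u → ConvFinite (PF Y r u) g := fun Y hY =>
    convFinite_signedPartFn _ (fun _ ha => hY.dotZ_ne_zero ha) fun _ hμ => hu.1 _ (hg hμ)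
  -- `(X \ t) \ r = (X \ r) \ t`, `(X \ r) ∩ t = (X ∩ t) \ r`, `(X \ t) ∩ r = (X ∩ r) \ (t ∩ r)`
  have hdiff_comm : (outSub X t).filter (fun a => !decide (castV a ∈ r)) =
      (outSub X r).filter (fun a => decide (castV a ∉ t)) := by
    simp [outSub, List.filter_filter, Bool.and_comm]
  have hdiff_inter : (outSub X r).filter (fun a => !decide (castV a ∉ t)) = outSub (inSub X t) r := by
    simp [outSub, inSub, List.filter_filter, Bool.and_comm]
  have hinter_diff : (outSub X t).filter (fun a => decide (castV a ∈ r)) =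
      outSub (inSub X r) (t ⊓ r) := by
    simp only [outSub, inSub, List.filter_filter]
    refine List.filter_congr fun a _ => ?_
    by_cases h : castV a ∈ r <;> simp [h, Submodule.mem_inf]
  calc nabOut X t (conv (PF X r u) g)
      = nabL ((outSub X t).filter fun a => decide (castV a ∈ r))
          (nabL ((outSub X r).filter fun a => decide (castV a ∉ t)) (conv (PF X r u) g)) := by
        rw [nabOut, nabL_eq_nabL_filter_nabL_filter (fun a => decide (castV a ∈ r)), hdiff_comm]
    _ = nabL (outSub (inSub X r) (t ⊓ r)) (conv (PF (inSub X t) r u) g) := by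
        rw [nabL_conv_left (hfin X hu), PF_eq_signedPartFn,
          nabL_filter_signedPartFn _ _ fun _ ha => hu.dotZ_ne_zero ha, hdiff_inter, hinter_diff,
          ← PF_eq_signedPartFn]
    _ = _ := nabL_conv_right (hfin _ (hu.inSub t)) _

/-- The "mother formula": for `g` supported on `Γ ∩ r`,
`∇_{X\t}(𝓟_{X\r}^F * g) = 𝓟_{(X\r)∩t}^F * (∇_{(X∩r)\(t∩r)} g)`. -/
theorem mother_formula {ι : Type*} [Fintype ι] (X : List (ZLat ι))
    (hX0 : ∀ a ∈ X, a ≠ 0) (hspan : spanOf X = ⊤)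
    (r t : Submodule ℝ (Amb ι)) (hr : IsRational X r) (ht : IsRational X t)
    (u : Amb ι) (hu : Reg X r u)
    (g : ZLat ι → ℤ) (hg : Function.support g ⊆ {γ | castV γ ∈ r}) :
    nabOut X t (conv (PF X r u) g) =
      conv (PF (inSub X t) r u) (nabL (outSub (inSub X r) (t ⊓ r)) g) :=
  mother_formula_general X r t u hu g hg
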